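/- If R: V → G is a relative Rota-Baxter operator of weight 0, then (V, +, *) with u * v = u + Φ(R(u))v is a left brace, i.e., (V,+) is an abelian group, (V,*) is a group, and x*(y+z) = (x*y) + (x*z) − x for all x,y,z ∈ V. -/

import Mathlib

/-- The multiplicative group structure that older Mathlib put on `AddAut M`
(composition, `e₁ * e₂ = e₂.trans e₁`); Mathlib now gives `AddAut M` an additive group. -/
instance AddAut.oldMulGroup (M : Type*) [Add M] : Group (AddAut M) where
  mul g h := AddEquiv.trans h g
  one := AddEquiv.refl _
  inv := AddEquiv.symm
  mul_assoc _ _ _ := rfl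
  one_mul _ := rfl
  mul_one _ := rfl
  inv_mul_cancel := AddEquiv.self_trans_symm

/-!
With `u ∘ v := u + Φ(R u) v`, the Rota–Baxter identity says `R (u ∘ v) = R u * R v`, so `R` is
a homomorphism for `∘`. Associativity of `∘` follows, `R 0 = 1` is forced by `R 0 * R 0 = R 0`,
and the inverse `-Φ((R u)⁻¹) u` of `u` has `R`-value `(R u)⁻¹`, which gives the left inverse law.
-/

namespace AddAut

variable {M : Type*} [Add M]

theorem oldMul_apply (a b : AddAut M) (x : M) : (a * b) x = a (b x) := rfl

theorem oldOne_apply (x : M) : (1 : AddAut M) x = x := rfl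

end AddAut

section RelativeRotaBaxter

variable {G V : Type*} [Group G] [AddCommGroup V] (Φ : G →* AddAut V)

theorem apply_apply_inv_of_addAut (g : G) (u : V) : Φ g (Φ g⁻¹ u) = u := by
  rw [← AddAut.oldMul_apply, ← map_mul, mul_inv_cancel, map_one, AddAut.oldOne_apply]

theorem add_apply_neg_apply_inv (g : G) (u : V) : u + Φ g (-(Φ g⁻¹ u)) = 0 := by
  rw [map_neg, apply_apply_inv_of_addAut, add_neg_cancel]

variable {R : V → G}

theorem rotaBaxter_map_zero (hR : ∀ u v : V, R u * R v = R (u + Φ (R u) v)) : R 0 = 1 := by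
  have h := hR 0 0
  rwa [map_zero, add_zero, mul_eq_left] at h

theorem rotaBaxter_assoc (hR : ∀ u v : V, R u * R v = R (u + Φ (R u) v)) (u v w : V) :
    (u + Φ (R u) v) + Φ (R (u + Φ (R u) v)) w = u + Φ (R u) (v + Φ (R v) w) := by
  rw [← hR, map_mul, AddAut.oldMul_apply, map_add, add_assoc]

theorem rotaBaxter_map_inv (hR : ∀ u v : V, R u * R v = R (u + Φ (R u) v)) (u : V) :
    R (-(Φ (R u)⁻¹ u)) = (R u)⁻¹ :=
  eq_inv_of_mul_eq_one_right <| by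
    rw [hR, add_apply_neg_apply_inv, rotaBaxter_map_zero Φ hR]

end RelativeRotaBaxter

theorem rrb_brace {G V : Type*} [Group G] [AddCommGroup V]
    (Φ : G →* AddAut V) (R : V → G)
    (hR : ∀ u v : V, R u * R v = R (u + Φ (R u) v)) :
    (∀ u v w : V, (u + Φ (R u) v) + Φ (R (u + Φ (R u) v)) w
        = u + Φ (R u) (v + Φ (R v) w)) ∧
    (∀ u : V, (0 : V) + Φ (R 0) u = u) ∧
    (∀ u : V, u + Φ (R u) (0 : V) = u) ∧
    (∀ u : V, u + Φ (R u) (-(Φ ((R u)⁻¹) u)) = 0) ∧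
    (∀ u : V, -(Φ ((R u)⁻¹) u) + Φ (R (-(Φ ((R u)⁻¹) u))) u = 0) ∧
    (∀ x y z : V, x + Φ (R x) (y + z) = (x + Φ (R x) y) + (x + Φ (R x) z) - x) := by
  refine ⟨rotaBaxter_assoc Φ hR, fun u => ?_, fun u => ?_,
    fun u => add_apply_neg_apply_inv Φ (R u) u, fun u => ?_, fun x y z => ?_⟩
  · rw [rotaBaxter_map_zero Φ hR, map_one, AddAut.oldOne_apply, zero_add]
  · rw [map_zero, add_zero]
  · rw [rotaBaxter_map_inv Φ hR, neg_add_cancel]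
  · rw [map_add]
    abel
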